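/- Commutation of distant steps in a line network: if C →^{(u,t)} C₁ →^{(v,t')} C' in a line topology with d(u,v) ≥ 3, then there exists C₂ with C →^{(v,t')} C₂ →^{(u,t)} C'. -/

import Mathlib

namespace BN

/-- Actions of a broadcast protocol: broadcast `!!m`, reception `?m`, internal `τ`. -/
inductive Act (M : Type) : Type where
  | brd : M → Act M
  | rcv : M → Act M
  | tau : Act M

/-- A broadcast protocol: an initial state and a set of transitions. -/
structure Protocol (Q M : Type) : Type where
  qin : Q
  delta : Set (Q × Act M × Q)

variable {Q M V : Type}

/-- `q` has an outgoing reception of `m`. -/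
def canRecv (P : Protocol Q M) (q : Q) (m : M) : Prop :=
  ∃ q', (q, Act.rcv m, q') ∈ P.delta

/-- One step of the broadcast network semantics over topology `G`,
performed by vertex `v` taking transition `t`. -/
def Step (G : SimpleGraph V) (P : Protocol Q M) (v : V)
    (t : Q × Act M × Q) (L L' : V → Q) : Prop :=
  t ∈ P.delta ∧ L v = t.1 ∧ L' v = t.2.2 ∧
  (match t.2.1 with
   | Act.tau => ∀ u, u ≠ v → L' u = L u
   | Act.brd m =>
       (∀ u, G.Adj v u →
          ((L u, Act.rcv m, L' u) ∈ P.delta ∨ (¬ canRecv P (L u) m ∧ L' u = L u))) ∧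
       (∀ u, u ≠ v → ¬ G.Adj v u → L' u = L u)
   | Act.rcv _ => False)

def StepAny (G : SimpleGraph V) (P : Protocol Q M) (L L' : V → Q) : Prop :=
  ∃ v t, Step G P v t L L'

def Reach (G : SimpleGraph V) (P : Protocol Q M) : (V → Q) → (V → Q) → Prop :=
  Relation.ReflTransGen (StepAny G P)

def initConf (P : Protocol Q M) : V → Q := fun _ => P.qin

/-- `qf` is coverable over the class of all (finite) graph topologies. -/
def Coverable (P : Protocol Q M) (qf : Q) : Prop :=
  ∃ (V' : Type) (_ : Fintype V') (G : SimpleGraph V') (L : V' → Q),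
    Reach G P (initConf P) L ∧ ∃ v, L v = qf

/-- A tree topology: a prefix-closed finite set of words over ℕ containing ε. -/
structure TreeTopo : Type where
  verts : Finset (List ℕ)
  nil_mem : ([] : List ℕ) ∈ verts
  prefixClosed : ∀ w ∈ verts, ∀ w' : List ℕ, w' <+: w → w' ∈ verts

abbrev TreeTopo.Vert (T : TreeTopo) : Type := {w : List ℕ // w ∈ T.verts}

def TreeTopo.root (T : TreeTopo) : T.Vert := ⟨[], T.nil_mem⟩

/-- The graph of a tree topology: each word `w ++ [x]` is adjacent to its parent `w`. -/
def TreeTopo.graph (T : TreeTopo) : SimpleGraph T.Vert where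
  Adj u v := (∃ x : ℕ, (v : List ℕ) = (u : List ℕ) ++ [x]) ∨
             (∃ x : ℕ, (u : List ℕ) = (v : List ℕ) ++ [x])
  symm := ⟨by intro u v h; exact Or.symm h⟩
  loopless := ⟨by
    intro u h
    rcases h with ⟨x, hx⟩ | ⟨x, hx⟩ <;> simpa using congrArg List.length hx⟩

def CoverableWith (T : TreeTopo) (P : Protocol Q M) (qf : Q) : Prop :=
  ∃ L : T.Vert → Q, Reach T.graph P (initConf P) L ∧ ∃ u, L u = qf

def CoverableTreeRoot (P : Protocol Q M) (qf : Q) : Prop :=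
  ∃ (T : TreeTopo) (L : T.Vert → Q),
    Reach T.graph P (initConf P) L ∧ L T.root = qf

/-- `(T, lam)` is the unfolding of graph `G` at vertex `v` to depth `n`. -/
structure IsUnfolding {V : Type} (G : SimpleGraph V) (v : V) (n : ℕ)
    (T : TreeTopo) (lam : T.Vert → V) : Prop where
  root_lbl : lam T.root = v
  depth_le : ∀ w ∈ T.verts, w.length ≤ n
  root_children :
    Set.BijOn lam {u : T.Vert | ∃ x : ℕ, (u : List ℕ) = [x]} (G.neighborSet v)
  children : ∀ (u : T.Vert) (w : List ℕ) (hw : w ∈ T.verts) (x : ℕ),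
      (u : List ℕ) = w ++ [x] → (u : List ℕ).length < n →
      Set.BijOn lam {u' : T.Vert | ∃ y : ℕ, (u' : List ℕ) = (u : List ℕ) ++ [y]}
        (G.neighborSet (lam u) \ {lam ⟨w, hw⟩})
  no_deep : ∀ u : T.Vert, n ≤ (u : List ℕ).length →
      ∀ x : ℕ, (u : List ℕ) ++ [x] ∉ T.verts

/-- Phase tags annotating states: `zero` (phase 0), broadcast phase `j`, reception phase `j`. -/
inductive PTag : Type where
  | zero : PTag
  | bph : ℕ → PTag
  | rph : ℕ → PTag
deriving DecidableEq

def bOf : ℕ → PTag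
  | 0 => .zero
  | j+1 => .bph (j+1)

def rOf : ℕ → PTag
  | 0 => .zero
  | j+1 => .rph (j+1)

/-- `φ` witnesses that `P` is `k`-phase-bounded. -/
def IsPhaseAssignment (k : ℕ) (P : Protocol Q M) (φ : Q → PTag) : Prop :=
  φ P.qin = .zero ∧
  (∀ q : Q, φ q = .zero ∨ ∃ j, 1 ≤ j ∧ j ≤ k ∧ (φ q = .bph j ∨ φ q = .rph j)) ∧
  ∀ t ∈ P.delta,
    (match t.2.1 with
     | Act.tau => φ t.1 = φ t.2.2
     | Act.brd _ =>
         (∃ j, 1 ≤ j ∧ j ≤ k ∧ φ t.1 = .bph j ∧ φ t.2.2 = .bph j) ∨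
         (∃ i, i < k ∧ φ t.1 = rOf i ∧ φ t.2.2 = .bph (i+1))
     | Act.rcv _ =>
         (∃ j, 1 ≤ j ∧ j ≤ k ∧ φ t.1 = .rph j ∧ φ t.2.2 = .rph j) ∨
         (∃ i, i < k ∧ φ t.1 = bOf i ∧ φ t.2.2 = .rph (i+1)) ∨
         (1 ≤ k ∧ φ t.1 = .bph k ∧ φ t.2.2 = .rph k))

def IsPhaseBounded (k : ℕ) (P : Protocol Q M) : Prop :=
  ∃ φ : Q → PTag, IsPhaseAssignment k P φ

/-- The `k`-unfolding `Pₖ` of a protocol `P`. -/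
def unfoldP (P : Protocol Q M) (k : ℕ) : Protocol (Q × PTag) M where
  qin := (P.qin, .zero)
  delta :=
    {t | ∃ q p, (q, Act.tau, p) ∈ P.delta ∧ t = ((q, .zero), Act.tau, (p, .zero))} ∪
    {t | ∃ q p α j, 1 ≤ j ∧ j ≤ k ∧ (q, α, p) ∈ P.delta ∧
        (α = Act.tau ∨ ∃ m, α = Act.rcv m) ∧ t = ((q, .rph j), α, (p, .rph j))} ∪
    {t | ∃ q p α j, 1 ≤ j ∧ j ≤ k ∧ (q, α, p) ∈ P.delta ∧
        (α = Act.tau ∨ ∃ m, α = Act.brd m) ∧ t = ((q, .bph j), α, (p, .bph j))} ∪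
    {t | ∃ q p m j, j < k ∧ (q, Act.brd m, p) ∈ P.delta ∧
        t = ((q, rOf j), Act.brd m, (p, .bph (j+1)))} ∪
    {t | ∃ q p m j, j < k ∧ (q, Act.rcv m, p) ∈ P.delta ∧
        t = ((q, bOf j), Act.rcv m, (p, .rph (j+1)))} ∪
    {t | ∃ q p m, 1 ≤ k ∧ (q, Act.rcv m, p) ∈ P.delta ∧
        t = ((q, .bph k), Act.rcv m, (p, .rph k))}

/-- Star topology: root `none` adjacent to every leaf `some i`, no other edges. -/
def starGraph (ι : Type) : SimpleGraph (Option ι) where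
  Adj u v := (u = none ∧ v ≠ none) ∨ (v = none ∧ u ≠ none)
  symm := ⟨by intro u v h; first | tauto | (simp only at h ⊢; tauto)⟩
  loopless := ⟨by intro u h; first | tauto | (simp only at h ⊢; tauto)⟩

/-- For a 1-phase-bounded protocol with witness `φ`, `Q^b = Q₀ ∪ Q₁^b`. -/
def Qb (φ : Q → PTag) : Set Q := {q | φ q = .zero ∨ φ q = .bph 1}

/-- The set component of the broadcast-print of a star configuration. -/
def bprintSet {ι : Type} (φ : Q → PTag) (L : Option ι → Q) : Set Q :=
  {q | q ∈ Qb φ ∧ ∃ i, L (some i) = q}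

/-- The abstract transition relation `⇒` on broadcast-prints. -/
def PrintStep (P : Protocol Q M) (φ : Q → PTag) :
    (Q × Set Q) → (Q × Set Q) → Prop := fun pr pr' =>
  ∃ (ι : Type) (_ : Fintype ι) (L L' : Option ι → Q),
    StepAny (starGraph ι) P L L' ∧ L none ∈ Qb φ ∧ L' none ∈ Qb φ ∧
    pr = (L none, bprintSet φ L) ∧ pr' = (L' none, bprintSet φ L')

/-- Line topology on `Fin ℓ`: consecutive vertices are adjacent. -/
def lineGraph (ℓ : ℕ) : SimpleGraph (Fin ℓ) where
  Adj i j := (i : ℕ) + 1 = (j : ℕ) ∨ (j : ℕ) + 1 = (i : ℕ)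
  symm := ⟨by intro i j h; first | tauto | (simp only at h ⊢; tauto)⟩
  loopless := ⟨by intro i h; rcases h with h | h <;> omega⟩

/-- `t` is a broadcast transition. -/
def IsBrdT (t : Q × Act M × Q) : Prop := ∃ m, t.2.1 = Act.brd m

/-- In the execution described by `vs, ts` of length `n`, `i` is the first index at
which vertex `u` performs a broadcast. -/
def IsFirstBrd {V' : Type} (vs : ℕ → V') (ts : ℕ → Q × Act M × Q) (n : ℕ)
    (u : V') (i : ℕ) : Prop :=
  i < n ∧ vs i = u ∧ IsBrdT (ts i) ∧ ∀ j < i, vs j = u → ¬ IsBrdT (ts j)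

/-- Every transition of `u` occurs no later than every broadcast of `w`
(i.e. lastBroadcast(u) ≤ firstBroadcast(w)). -/
def BrdOrder {V' : Type} (n : ℕ) (vs : ℕ → V') (ts : ℕ → Q × Act M × Q)
    (u w : V') : Prop :=
  ∀ j j', j < n → j' < n → vs j = u → vs j' = w → IsBrdT (ts j') → j ≤ j'

/-- One application of the pair-coverability operator. -/
def pairStep (P : Protocol Q M) (S : Set (Q × Q)) : Set (Q × Q) :=
  S ∪
  {p | ∃ p₁, (p₁, p.2) ∈ S ∧ (p₁, Act.tau, p.1) ∈ P.delta} ∪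
  {p | ∃ p₂, (p.1, p₂) ∈ S ∧ (p₂, Act.tau, p.2) ∈ P.delta} ∪
  {p | ∃ p₁ p₂ m, (p₁, p₂) ∈ S ∧ (p₂, Act.brd m, p.2) ∈ P.delta ∧
      (p₁, Act.rcv m, p.1) ∈ P.delta} ∪
  {p | ∃ p₂ m, (p.1, p₂) ∈ S ∧ (p₂, Act.brd m, p.2) ∈ P.delta ∧ ¬ canRecv P p.1 m} ∪
  {p | p.1 = P.qin ∧ ∃ q', (p.2, q') ∈ S}

/-- The iteration `S₀ ⊆ S₁ ⊆ …` of the pair-coverability operator. -/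
def Siter (P : Protocol Q M) : ℕ → Set (Q × Q)
  | 0 => {(P.qin, P.qin)}
  | i+1 => pairStep P (Siter P i)


/-! A step at `x` reads and writes the configuration only on the closed neighbourhood of `x`.
In a line, vertices at distance at least `3` have disjoint closed neighbourhoods, so two steps at
such vertices act on disjoint parts of the configuration and can be swapped. -/

def closedNbhd (G : SimpleGraph V) (x : V) : Set V := insert x (G.neighborSet x)

lemma mem_closedNbhd {G : SimpleGraph V} {x w : V} : w ∈ closedNbhd G x ↔ w = x ∨ G.Adj x w :=
  Iff.rfl

namespace Step

variable {G : SimpleGraph V} {P : Protocol Q M} {x : V} {t : Q × Act M × Q} {L L' : V → Q}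

lemma eq_of_notMem_closedNbhd (h : Step G P x t L L') {w : V} (hw : w ∉ closedNbhd G x) :
    L' w = L w := by
  rw [mem_closedNbhd, not_or] at hw
  obtain ⟨-, -, -, hm⟩ := h
  rcases t with ⟨q, m | m | _, p⟩
  · exact hm.2 w hw.1 hw.2
  · exact hm.elim
  · exact hm w hw.1

lemma of_eqOn_closedNbhd (h : Step G P x t L L') {K K' : V → Q}
    (hK : Set.EqOn K L (closedNbhd G x)) (hK' : Set.EqOn K' L' (closedNbhd G x))
    (hout : ∀ w ∉ closedNbhd G x, K' w = K w) : Step G P x t K K' := by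
  have hx : x ∈ closedNbhd G x := Set.mem_insert x _
  obtain ⟨ht, hL, hL', hm⟩ := h
  refine ⟨ht, (hK hx).trans hL, (hK' hx).trans hL', ?_⟩
  rcases t with ⟨q, m | m | _, p⟩
  · refine ⟨fun w hw => ?_, fun w hne hadj => hout w ?_⟩
    · rw [hK (Or.inr hw), hK' (Or.inr hw)]
      exact hm.1 w hw
    · rw [mem_closedNbhd]
      tauto
  · exact hm.elim
  · intro w hne
    by_cases hw : w ∈ closedNbhd G x
    · rw [hK hw, hK' hw]
      exact hm w hne
    · exact hout w hw

theorem comm_of_disjoint_closedNbhd {y : V} {t' : Q × Act M × Q} {L₁ : V → Q}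
    (hxy : Disjoint (closedNbhd G x) (closedNbhd G y))
    (h1 : Step G P x t L L₁) (h2 : Step G P y t' L₁ L') :
    ∃ L₂, Step G P y t' L L₂ ∧ Step G P x t L₂ L' := by
  classical
  refine ⟨(closedNbhd G y).piecewise L' L, ?_, ?_⟩
  · refine h2.of_eqOn_closedNbhd (fun w hw => ?_) (Set.piecewise_eqOn _ _ _)
      (fun w hw => Set.piecewise_eq_of_notMem _ _ _ hw)
    exact (h1.eq_of_notMem_closedNbhd (hxy.notMem_of_mem_right hw)).symm
  · refine h1.of_eqOn_closedNbhd
      (fun w hw => Set.piecewise_eq_of_notMem _ _ _ (hxy.notMem_of_mem_left hw))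
      (fun w hw => h2.eq_of_notMem_closedNbhd (hxy.notMem_of_mem_left hw)) (fun w hw => ?_)
    by_cases hy : w ∈ closedNbhd G y
    · exact (Set.piecewise_eq_of_mem _ _ _ hy).symm
    · rw [Set.piecewise_eq_of_notMem _ _ _ hy, h2.eq_of_notMem_closedNbhd hy,
        h1.eq_of_notMem_closedNbhd hw]

end Step

lemma disjoint_closedNbhd_lineGraph {ℓ : ℕ} {u v : Fin ℓ} (h : 3 ≤ Nat.dist u v) :
    Disjoint (closedNbhd (lineGraph ℓ) u) (closedNbhd (lineGraph ℓ) v) := by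
  simp only [Set.disjoint_left, mem_closedNbhd, lineGraph, Fin.ext_iff]
  unfold Nat.dist at h
  intro w
  omega

/-- steps of vertices at distance ≥ 3 in a line commute. -/
theorem line_commute_distant {Q M : Type} (P : Protocol Q M) (ℓ : ℕ)
    (u v : Fin ℓ) (t t' : Q × Act M × Q) (C C₁ C' : Fin ℓ → Q)
    (hd : 3 ≤ Nat.dist (u : ℕ) (v : ℕ))
    (h1 : Step (lineGraph ℓ) P u t C C₁)
    (h2 : Step (lineGraph ℓ) P v t' C₁ C') :
    ∃ C₂, Step (lineGraph ℓ) P v t' C C₂ ∧ Step (lineGraph ℓ) P u t C₂ C' :=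
  Step.comm_of_disjoint_closedNbhd (disjoint_closedNbhd_lineGraph hd) h1 h2

end BN
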